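/- arXiv:2406.02789 — 7 statements merged into one kernel-verified Lean document; each statement's English description precedes it below -/
import Mathlib

section
/- For a dataset D = (s₁,…,sₙ) drawn i.i.d. from P (i.e., D ∼ Pⁿ), define the clipping bias b_D := max_{x∈𝒳} ‖(1/n) Σ_{i=1}^n ( g(x,sᵢ) − Π_C(g(x,sᵢ)) )‖. Then E_{D∼Pⁿ}[ b_D ] ≤ G_k^k / ((k−1)·C^{k−1}). -/
open MeasureTheory

/-- Euclidean clipping to the ball of radius `C`: `Π_C(v) = v·min(C/‖v‖, 1)`,
with `Π_C(0) = 0` (division by zero yields `0` in Lean). -/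
noncomputable def euclidClip {d : ℕ} (C : ℝ) (v : EuclideanSpace ℝ (Fin d)) :
    EuclideanSpace ℝ (Fin d) :=
  (min (C / ‖v‖) 1) • v

/-!
Clipping moves `v` by exactly `(‖v‖ - C)⁺`, and since `t ↦ t ^ k` lies above its tangent at `C`
(Bernoulli), `(t - C)⁺ ≤ t ^ k / ((k - 1) C ^ (k - 1))` for `t ≥ 0`. So the clipping bias of a
dataset is at most the empirical mean of `M(sᵢ) / ((k - 1) C ^ (k - 1))` with
`M(s) = max_{x ∈ 𝒳} ‖g(x,s)‖ ^ k`, and under `Pⁿ` that mean has expectation `E_P[M] ≤ G_k ^ k`.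
`M` is measurable because, by continuity, the maximum over `𝒳` is a supremum over a countable
dense subset.
-/

section CompactSup

variable {α : Type*} [TopologicalSpace α] {X : Set α}

/- In `ℝ`, `⨆ x ∈ X, f x` also ranges over the junk values `⨆ _ : x ∈ X, f x = 0` for `x ∉ X`;
nonnegativity makes them harmless. -/
lemma IsCompact.biSup_eq_iSup_subtype (hX : IsCompact X) {f : α → ℝ} (hf : ContinuousOn f X)
    (hf₀ : ∀ x ∈ X, 0 ≤ f x) : ⨆ x ∈ X, f x = ⨆ x : X, f x :=
  (ciSup_subtype_fun (by simpa [Set.image_eq_range] using hX.bddAbove_image hf)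
    (by simpa using Real.iSup_nonneg fun x : X => hf₀ x x.2)).symm

lemma IsCompact.le_biSup (hX : IsCompact X) {f : α → ℝ} (hf : ContinuousOn f X)
    (hf₀ : ∀ x ∈ X, 0 ≤ f x) {x : α} (hx : x ∈ X) : f x ≤ ⨆ y ∈ X, f y := by
  rw [hX.biSup_eq_iSup_subtype hf hf₀]
  exact le_ciSup (f := fun y : X => f y) (by simpa [Set.image_eq_range] using hX.bddAbove_image hf)
    ⟨x, hx⟩

lemma IsCompact.measurable_biSup [TopologicalSpace.PseudoMetrizableSpace α] {S : Type*}
    [MeasurableSpace S] (hX : IsCompact X) {F : α → S → ℝ} (hF : ∀ x, Measurable (F x))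
    (hFc : ∀ s, ContinuousOn (F · s) X) (hF₀ : ∀ x ∈ X, ∀ s, 0 ≤ F x s) :
    Measurable fun s => ⨆ x ∈ X, F x s := by
  have := hX.isSeparable.separableSpace
  obtain ⟨T, hTc, hTd⟩ := TopologicalSpace.exists_countable_dense X
  have := hTc.to_subtype
  have sup_eq : ∀ s, ⨆ x ∈ X, F x s = ⨆ t : T, F t s := fun s => by
    rw [hX.biSup_eq_iSup_subtype (hFc s) (fun x hx => hF₀ x hx s)]
    exact (hTd.ciSup' (hFc s).domRestrict).symm
  simp_rw [sup_eq]
  exact Measurable.iSup fun t => hF t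

end CompactSup

lemma lintegral_pi_ofReal_mean {S ι : Type*} [MeasurableSpace S] [Fintype ι] [Nonempty ι]
    (P : Measure S) [IsProbabilityMeasure P] {φ : S → ℝ} (hφ : Measurable φ)
    (hφ₀ : ∀ s, 0 ≤ φ s) :
    ∫⁻ D : ι → S, ENNReal.ofReal ((Fintype.card ι : ℝ)⁻¹ * ∑ i, φ (D i)) ∂(Measure.pi fun _ => P)
      = ∫⁻ s, ENNReal.ofReal (φ s) ∂P := by
  have marginal : ∀ i, ∫⁻ D : ι → S, ENNReal.ofReal (φ (D i)) ∂(Measure.pi fun _ => P)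
      = ∫⁻ s, ENNReal.ofReal (φ s) ∂P := fun i =>
    (measurePreserving_eval (fun _ => P) i).lintegral_comp hφ.ennreal_ofReal
  simp_rw [ENNReal.ofReal_mul (inv_nonneg.2 (Nat.cast_nonneg _)),
    ENNReal.ofReal_sum_of_nonneg fun i _ => hφ₀ _]
  rw [lintegral_const_mul' _ _ ENNReal.ofReal_ne_top, lintegral_finsetSum _ fun i _ => by fun_prop]
  simp_rw [marginal, Finset.sum_const, Finset.card_univ, nsmul_eq_mul]
  rw [ENNReal.ofReal_inv_of_pos (by positivity), ENNReal.ofReal_natCast, ← mul_assoc,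
    ENNReal.inv_mul_cancel (by simp) (by simp), one_mul]

section Clipping

variable {d : ℕ} {C : ℝ} {k : ℕ}

lemma sub_one_mul_pow_pos (hC : 0 < C) (hk : 2 ≤ k) :
    0 < ((k : ℝ) - 1) * C ^ (k - 1) := by
  have : (2 : ℝ) ≤ k := by exact_mod_cast hk
  exact mul_pos (by linarith) (pow_pos hC _)

lemma max_sub_zero_le_pow_div {t : ℝ} (hC : 0 < C) (ht : 0 ≤ t) (hk : 2 ≤ k) :
    max (t - C) 0 ≤ t ^ k / (((k : ℝ) - 1) * C ^ (k - 1)) := by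
  have hc := sub_one_mul_pow_pos hC hk
  refine max_le ?_ (div_nonneg (pow_nonneg ht k) hc.le)
  rw [le_div_iff₀ hc]
  obtain ⟨m, rfl⟩ : ∃ m, k = m + 1 := ⟨k - 1, by omega⟩
  have tangent : C ^ m * (C + (m + 1) * (t - C)) ≤ t ^ (m + 1) := by
    have bernoulli :=
      one_add_mul_le_pow (a := t / C - 1) (by linarith [div_nonneg ht hC.le]) (m + 1)
    rw [add_sub_cancel, div_pow, le_div_iff₀ (by positivity)] at bernoulli
    calc C ^ m * (C + (m + 1) * (t - C)) = (1 + ↑(m + 1) * (t / C - 1)) * C ^ (m + 1) := by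
          rw [pow_succ]; field_simp; push_cast; ring
      _ ≤ t ^ (m + 1) := bernoulli
  rw [Nat.cast_succ, add_sub_cancel_right, Nat.add_sub_cancel]
  nlinarith [mul_nonneg (pow_pos hC m).le ht]

lemma norm_sub_euclidClip (hC : 0 ≤ C) (v : EuclideanSpace ℝ (Fin d)) :
    ‖v - euclidClip C v‖ = max (‖v‖ - C) 0 := by
  rcases (norm_nonneg v).eq_or_lt with hv | hv
  · simp [norm_eq_zero.1 hv.symm, euclidClip, hC]
  have : v - euclidClip C v = (1 - min (C / ‖v‖) 1) • v := by
    rw [euclidClip, sub_smul, one_smul]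
  rw [this, norm_smul, Real.norm_of_nonneg (sub_nonneg.2 (min_le_right _ _)), sub_inf, sub_self,
    max_mul_of_nonneg _ _ hv.le, sub_mul, div_mul_cancel₀ _ hv.ne', one_mul, zero_mul]

lemma norm_sub_euclidClip_le (hC : 0 < C) (hk : 2 ≤ k) (v : EuclideanSpace ℝ (Fin d)) :
    ‖v - euclidClip C v‖ ≤ ‖v‖ ^ k / (((k : ℝ) - 1) * C ^ (k - 1)) :=
  norm_sub_euclidClip hC.le v ▸ max_sub_zero_le_pow_div hC (norm_nonneg v) hk

lemma norm_smul_sum_sub_euclidClip_le (hC : 0 < C) (hk : 2 ≤ k) {ι : Type*} (s : Finset ι)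
    {a : ℝ} (ha : 0 ≤ a) (v : ι → EuclideanSpace ℝ (Fin d)) :
    ‖a • ∑ i ∈ s, (v i - euclidClip C (v i))‖
      ≤ a * ∑ i ∈ s, ‖v i‖ ^ k / (((k : ℝ) - 1) * C ^ (k - 1)) := by
  rw [norm_smul, Real.norm_of_nonneg ha]
  gcongr
  exact (norm_sum_le _ _).trans (Finset.sum_le_sum fun i _ => norm_sub_euclidClip_le hC hk (v i))

lemma biSup_norm_smul_sum_sub_euclidClip_le {α ι : Type*} [TopologicalSpace α] {X : Set α}
    (hX : IsCompact X) (hC : 0 < C) (hk : 2 ≤ k) {w : α → ι → EuclideanSpace ℝ (Fin d)}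
    (hw : ∀ i, ContinuousOn (w · i) X) (s : Finset ι) {a : ℝ} (ha : 0 ≤ a) :
    ⨆ x ∈ X, ‖a • ∑ i ∈ s, (w x i - euclidClip C (w x i))‖
      ≤ a * ∑ i ∈ s, (⨆ x ∈ X, ‖w x i‖ ^ k) / (((k : ℝ) - 1) * C ^ (k - 1)) := by
  have hc := sub_one_mul_pow_pos hC hk
  have hb₀ : 0 ≤ a * ∑ i ∈ s, (⨆ x ∈ X, ‖w x i‖ ^ k) / (((k : ℝ) - 1) * C ^ (k - 1)) :=
    mul_nonneg ha <| Finset.sum_nonneg fun i _ => div_nonneg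
      (Real.iSup_nonneg fun _ => Real.iSup_nonneg fun _ => by positivity) hc.le
  refine Real.iSup_le (fun x => Real.iSup_le (fun hx => ?_) hb₀) hb₀
  refine (norm_smul_sum_sub_euclidClip_le hC hk s ha _).trans ?_
  gcongr with i
  exact hX.le_biSup (f := fun y => ‖w y i‖ ^ k) ((hw i).norm.pow k) (fun _ _ => by positivity) hx

end Clipping

theorem expected_clipping_bias_general
    {d : ℕ} {S : Type*} [MeasurableSpace S]
    (P : Measure S) [IsProbabilityMeasure P]
    (X : Set (EuclideanSpace ℝ (Fin d)))
    (hXcomp : IsCompact X)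
    (g : EuclideanSpace ℝ (Fin d) → S → EuclideanSpace ℝ (Fin d))
    (hgmeas : Measurable (fun p : EuclideanSpace ℝ (Fin d) × S => g p.1 p.2))
    (hgcont : ∀ s, ContinuousOn (fun x => g x s) X)
    (k : ℕ) (hk : 2 ≤ k) (n : ℕ) (hn : 1 ≤ n)
    (C : ℝ) (hC : 0 < C) (G : ℝ)
    (hmoment : ∫⁻ s, ENNReal.ofReal (⨆ x ∈ X, ‖g x s‖ ^ k) ∂P ≤ ENNReal.ofReal (G ^ k)) :
    (∫⁻ D : Fin n → S,
        ENNReal.ofReal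
          (⨆ x ∈ X, ‖(n : ℝ)⁻¹ • ∑ i, (g x (D i) - euclidClip C (g x (D i)))‖)
        ∂(Measure.pi fun _ : Fin n => P))
      ≤ ENNReal.ofReal (G ^ k / (((k : ℝ) - 1) * C ^ (k - 1))) := by
  set c : ℝ := ((k : ℝ) - 1) * C ^ (k - 1)
  have hc : 0 < c := sub_one_mul_pow_pos hC hk
  set M : S → ℝ := fun s => ⨆ x ∈ X, ‖g x s‖ ^ k
  have hM_meas : Measurable M := hXcomp.measurable_biSup
    (fun x => (hgmeas.comp (measurable_const.prodMk measurable_id)).norm.pow_const k)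
    (fun s => (hgcont s).norm.pow k) (fun _ _ _ => by positivity)
  have hM₀ : ∀ s, 0 ≤ M s := fun s =>
    Real.iSup_nonneg fun _ => Real.iSup_nonneg fun _ => by positivity
  have : Nonempty (Fin n) := ⟨⟨0, hn⟩⟩
  calc _ ≤ ∫⁻ D : Fin n → S, ENNReal.ofReal ((n : ℝ)⁻¹ * ∑ i, M (D i) / c)
          ∂(Measure.pi fun _ => P) :=
        lintegral_mono fun D => ENNReal.ofReal_le_ofReal <|
          biSup_norm_smul_sum_sub_euclidClip_le hXcomp hC hk (fun i => hgcont (D i)) _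
            (by positivity)
    _ = ∫⁻ s, ENNReal.ofReal (M s / c) ∂P := by
        simpa using lintegral_pi_ofReal_mean (ι := Fin n) P (hM_meas.div_const c)
          fun s => div_nonneg (hM₀ s) hc.le
    _ = (∫⁻ s, ENNReal.ofReal (M s) ∂P) * ENNReal.ofReal c⁻¹ := by
        simp_rw [div_eq_mul_inv, ENNReal.ofReal_mul' (inv_nonneg.2 hc.le)]
        exact lintegral_mul_const' _ _ ENNReal.ofReal_ne_top
    _ ≤ ENNReal.ofReal (G ^ k) * ENNReal.ofReal c⁻¹ := by gcongr
    _ = ENNReal.ofReal (G ^ k / c) := by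
        rw [div_eq_mul_inv, ENNReal.ofReal_mul' (inv_nonneg.2 hc.le)]

/-- For `D ∼ Pⁿ` i.i.d., the expected clipping bias
`b_D = max_{x∈𝒳} ‖(1/n)∑ᵢ (g(x,sᵢ) − Π_C(g(x,sᵢ)))‖` satisfies
`E[b_D] ≤ G_k^k / ((k−1) C^{k−1})`. -/
theorem expected_clipping_bias
    {d : ℕ} {S : Type*} [MeasurableSpace S]
    (P : Measure S) [IsProbabilityMeasure P]
    (X : Set (EuclideanSpace ℝ (Fin d)))
    (hXne : X.Nonempty) (hXcomp : IsCompact X)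
    (g : EuclideanSpace ℝ (Fin d) → S → EuclideanSpace ℝ (Fin d))
    (hgmeas : Measurable (fun p : EuclideanSpace ℝ (Fin d) × S => g p.1 p.2))
    (hgcont : ∀ s, ContinuousOn (fun x => g x s) X)
    (k : ℕ) (hk : 2 ≤ k) (n : ℕ) (hn : 1 ≤ n)
    (C : ℝ) (hC : 0 < C) (G : ℝ) (hG : 0 ≤ G)
    (hmoment : ∫⁻ s, ENNReal.ofReal (⨆ x ∈ X, ‖g x s‖ ^ k) ∂P ≤ ENNReal.ofReal (G ^ k)) :
    (∫⁻ D : Fin n → S,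
        ENNReal.ofReal
          (⨆ x ∈ X, ‖(n : ℝ)⁻¹ • ∑ i, (g x (D i) - euclidClip C (g x (D i)))‖)
        ∂(Measure.pi fun _ : Fin n => P))
      ≤ ENNReal.ofReal (G ^ k / (((k : ℝ) - 1) * C ^ (k - 1))) :=
  expected_clipping_bias_general P X hXcomp g hgmeas hgcont k hk n hn C hC G hmoment
end

section
/- (Population-level localization.) Let λ > 0, Δ ≥ 0, I ≥ 1 be an integer, and let x₀, x₁, …, x_I ∈ 𝒳. For i = 1,…,I set λᵢ := λ·32^i and let x*ᵢ be the unique minimizer over 𝒳 of x ↦ F(x) + (λᵢ/2)·‖x − x_{i−1}‖². Assume that ‖xᵢ − x*ᵢ‖ ≤ Δ·4^i/λᵢ for every i ∈ {1,…,I}. Then F(x_I) − min_{x∈𝒳} F(x) ≤ G₁·Δ/(λ·8^I) + 16·Δ²/λ + 16·λ·D². -/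
set_option maxHeartbeats 1000000


/-- Population-level localization: with `λᵢ = λ·32^i`, if `x*ᵢ` minimizes
`F + (λᵢ/2)‖· − x_{i−1}‖²` over `X` and `‖xᵢ − x*ᵢ‖ ≤ Δ·4^i/λᵢ` for `i = 1, …, I`,
then `F(x_I) − min_X F ≤ G₁Δ/(λ·8^I) + 16Δ²/λ + 16λD²`. -/
theorem population_level_localization
    {d : ℕ} (X : Set (EuclideanSpace ℝ (Fin d)))
    (hXne : X.Nonempty) (hXcomp : IsCompact X) (hXconv : Convex ℝ X)
    (D G₁ lam Δ : ℝ) (hG₁ : 0 ≤ G₁) (hlam : 0 < lam) (hΔ : 0 ≤ Δ)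
    (hdiam : ∀ x ∈ X, ∀ y ∈ X, ‖x - y‖ ≤ D)
    (F : EuclideanSpace ℝ (Fin d) → ℝ)
    (hconv : ConvexOn ℝ X F)
    (hlip : ∀ x ∈ X, ∀ y ∈ X, |F x - F y| ≤ G₁ * ‖x - y‖)
    (I : ℕ) (hI : 1 ≤ I)
    (x xs : ℕ → EuclideanSpace ℝ (Fin d))
    (hx0 : x 0 ∈ X)
    (hx : ∀ i, 1 ≤ i → i ≤ I → x i ∈ X)
    (hxs : ∀ i, 1 ≤ i → i ≤ I →
      xs i ∈ X ∧
      IsMinOn (fun z => F z + lam * 32 ^ i / 2 * ‖z - x (i - 1)‖ ^ 2) X (xs i) ∧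
      ‖x i - xs i‖ ≤ Δ * 4 ^ i / (lam * 32 ^ i))
    (xmin : EuclideanSpace ℝ (Fin d)) (hxmin : xmin ∈ X) (hmin : IsMinOn F X xmin) :
    F (x I) - F xmin ≤ G₁ * Δ / (lam * 8 ^ I) + 16 * Δ ^ 2 / lam + 16 * lam * D ^ 2 := by
  have hD0 : 0 ≤ D := le_trans (norm_nonneg (x 0 - x 0)) (hdiam (x 0) hx0 (x 0) hx0)
  -- key induction on the proximal chain
  have key : ∀ i, 1 ≤ i → i ≤ I →
      F (xs i) ≤ F xmin + 16 * lam * D ^ 2 + 16 * Δ ^ 2 / lam * (1 - (1/2 : ℝ) ^ (i - 1)) := by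
    intro i hi
    induction i, hi using Nat.le_induction with
    | base =>
      intro h1I
      obtain ⟨hxs1X, hmin1, _⟩ := hxs 1 le_rfl h1I
      have h1 := isMinOn_iff.mp hmin1 xmin hxmin
      simp only [Nat.sub_self, pow_one] at h1 ⊢
      have hnorm : ‖xmin - x 0‖ ≤ D := hdiam xmin hxmin (x 0) hx0
      have hsq : ‖xmin - x 0‖ ^ 2 ≤ D ^ 2 := by
        nlinarith [norm_nonneg (xmin - x 0)]
      have hn2 : (0:ℝ) ≤ ‖xs 1 - x 0‖ ^ 2 := by positivity
      norm_num
      nlinarith [hlam.le]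
    | succ n hn ih =>
      intro hsI
      have hnI : n ≤ I := le_trans (Nat.le_succ n) hsI
      have hbn := ih hnI
      obtain ⟨hxsnX, _, hdn⟩ := hxs n hn hnI
      obtain ⟨_, hminS, _⟩ := hxs (n + 1) (by omega) hsI
      have h1 := isMinOn_iff.mp hminS (xs n) hxsnX
      simp only [Nat.add_sub_cancel] at h1
      have hd' : ‖xs n - x n‖ ≤ Δ * 4 ^ n / (lam * 32 ^ n) := by
        rw [norm_sub_rev]; exact hdn
      have hδ0 : (0:ℝ) ≤ Δ * 4 ^ n / (lam * 32 ^ n) := by positivity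
      have hsq : ‖xs n - x n‖ ^ 2 ≤ (Δ * 4 ^ n / (lam * 32 ^ n)) ^ 2 := by
        nlinarith [norm_nonneg (xs n - x n)]
      have hc0 : (0:ℝ) ≤ lam * 32 ^ (n + 1) / 2 := by positivity
      have e : lam * 32 ^ (n + 1) / 2 * (Δ * 4 ^ n / (lam * 32 ^ n)) ^ 2
          = 16 * Δ ^ 2 / lam * (1/2 : ℝ) ^ n := by
        have hhalf : ((1:ℝ)/2) ^ n = 16 ^ n / 32 ^ n := by
          rw [show (1:ℝ)/2 = 16/32 by norm_num, div_pow]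
        have h16 : (16:ℝ) ^ n = 4 ^ n * 4 ^ n := by
          rw [← mul_pow]; norm_num
        rw [hhalf, h16]
        have h32 : (32:ℝ) ^ n ≠ 0 := by positivity
        field_simp
        ring
      have hstep : lam * 32 ^ (n + 1) / 2 * ‖xs n - x n‖ ^ 2
          ≤ 16 * Δ ^ 2 / lam * (1/2 : ℝ) ^ n := by
        rw [← e]
        exact mul_le_mul_of_nonneg_left hsq hc0
      have hpow : ((1:ℝ)/2) ^ n = ((1:ℝ)/2) ^ (n - 1) * (1/2) := by
        rw [← pow_succ, Nat.sub_add_cancel hn]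
      have hn2 : (0:ℝ) ≤ lam * 32 ^ (n + 1) / 2 * ‖xs (n + 1) - x n‖ ^ 2 := by positivity
      have hΔ2 : (0:ℝ) ≤ 16 * Δ ^ 2 / lam := by positivity
      simp only [Nat.add_sub_cancel]
      have hgoal : F (xs (n + 1)) ≤ F (xs n) + 16 * Δ ^ 2 / lam * (1/2 : ℝ) ^ n := by
        nlinarith
      nlinarith [hgoal, hbn, hpow]
  -- final assembly
  obtain ⟨hxsIX, _, hdI⟩ := hxs I hI le_rfl
  have hlip' := hlip (x I) (hx I hI le_rfl) (xs I) hxsIX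
  have h1 : F (x I) - F (xs I) ≤ G₁ * ‖x I - xs I‖ :=
    le_trans (le_abs_self _) hlip'
  have h2 : G₁ * ‖x I - xs I‖ ≤ G₁ * (Δ * 4 ^ I / (lam * 32 ^ I)) :=
    mul_le_mul_of_nonneg_left hdI hG₁
  have e2 : G₁ * (Δ * 4 ^ I / (lam * 32 ^ I)) = G₁ * Δ / (lam * 8 ^ I) := by
    have h32 : (32:ℝ) ^ I = 8 ^ I * 4 ^ I := by rw [← mul_pow]; norm_num
    rw [h32]
    have h4 : (4:ℝ) ^ I ≠ 0 := by positivity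
    have h8 : (8:ℝ) ^ I ≠ 0 := by positivity
    field_simp
  have hkI := key I hI le_rfl
  have hp0 : (0:ℝ) ≤ ((1:ℝ)/2) ^ (I - 1) := by positivity
  have hΔ2 : (0:ℝ) ≤ 16 * Δ ^ 2 / lam := by positivity
  nlinarith [mul_le_mul_of_nonneg_left hp0 hΔ2]
end

section
/- (Population-level localization with optimized regularization.) Let Δ > 0, D > 0, I ≥ 1 an integer, and set λ := √(16Δ² + G₁Δ/8^I)/(4D) (which is positive). Let x₀, x₁, …, x_I ∈ 𝒳, and for i = 1,…,I set λᵢ := λ·32^i and let x*ᵢ be the unique minimizer over 𝒳 of x ↦ F(x) + (λᵢ/2)·‖x − x_{i−1}‖². Assume ‖xᵢ − x*ᵢ‖ ≤ Δ·4^i/λᵢ for every i ∈ {1,…,I}. Then F(x_I) − min_{x∈𝒳} F(x) ≤ 8·D·√(G₁·Δ/8^I) + 32·D·Δ. -/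
set_option maxHeartbeats 1000000 in
/-- Population-level localization with optimized regularization:
with `λ = √(16Δ² + G₁Δ/8^I)/(4D)` and `λᵢ = λ·32^i`, if `x*ᵢ` minimizes
`F + (λᵢ/2)‖· − x_{i−1}‖²` over `X` and `‖xᵢ − x*ᵢ‖ ≤ Δ·4^i/λᵢ` for `i = 1, …, I`,
then `F(x_I) − min_X F ≤ 8D√(G₁Δ/8^I) + 32DΔ`. -/

theorem population_level_localization_optimized
    {d : ℕ} (X : Set (EuclideanSpace ℝ (Fin d)))
    (hXne : X.Nonempty) (hXcomp : IsCompact X) (hXconv : Convex ℝ X)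
    (D G₁ Δ : ℝ) (hG₁ : 0 ≤ G₁) (hD : 0 < D) (hΔ : 0 < Δ)
    (hdiam : ∀ x ∈ X, ∀ y ∈ X, ‖x - y‖ ≤ D)
    (F : EuclideanSpace ℝ (Fin d) → ℝ)
    (hconv : ConvexOn ℝ X F)
    (hlip : ∀ x ∈ X, ∀ y ∈ X, |F x - F y| ≤ G₁ * ‖x - y‖)
    (I : ℕ) (hI : 1 ≤ I)
    (lam : ℝ) (hlam : lam = Real.sqrt (16 * Δ ^ 2 + G₁ * Δ / 8 ^ I) / (4 * D))
    (x xs : ℕ → EuclideanSpace ℝ (Fin d))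
    (hx0 : x 0 ∈ X)
    (hx : ∀ i, 1 ≤ i → i ≤ I → x i ∈ X)
    (hxs : ∀ i, 1 ≤ i → i ≤ I →
      xs i ∈ X ∧
      IsMinOn (fun z => F z + lam * 32 ^ i / 2 * ‖z - x (i - 1)‖ ^ 2) X (xs i) ∧
      ‖x i - xs i‖ ≤ Δ * 4 ^ i / (lam * 32 ^ i))
    (xmin : EuclideanSpace ℝ (Fin d)) (hxmin : xmin ∈ X) (hmin : IsMinOn F X xmin) :
    F (x I) - F xmin ≤ 8 * D * Real.sqrt (G₁ * Δ / 8 ^ I) + 32 * D * Δ := by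
  have hS : (0:ℝ) < 16 * Δ ^ 2 + G₁ * Δ / 8 ^ I := by positivity
  have hL : 0 < lam := by rw [hlam]; positivity
  have hLne : lam ≠ 0 := ne_of_gt hL
  -- key induction
  have key : ∀ n, 1 ≤ n → n ≤ I →
      F (xs n) ≤ F xmin + 16 * lam * D ^ 2 + 16 * Δ ^ 2 / lam * (1 - 2 * (1/2) ^ n) := by
    intro n
    induction n with
    | zero => omega
    | succ m ih =>
      intro _ hle
      rcases Nat.eq_zero_or_pos m with hm | hm
      · subst hm
        obtain ⟨hmem, hminon, _⟩ := hxs 1 le_rfl hle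
        have h1 := isMinOn_iff.mp hminon xmin hxmin
        simp only [pow_one, Nat.sub_self] at h1
        have hd : ‖xmin - x 0‖ ≤ D := hdiam _ hxmin _ hx0
        have hn0 : (0:ℝ) ≤ ‖xmin - x 0‖ := norm_nonneg _
        have hsq : ‖xmin - x 0‖ ^ 2 ≤ D ^ 2 := by nlinarith [hd, hn0]
        norm_num
        nlinarith [h1, mul_le_mul_of_nonneg_left hsq hL.le,
          mul_nonneg hL.le (sq_nonneg ‖xs 1 - x 0‖)]
      · obtain ⟨hmem, hminon, _⟩ := hxs (m+1) (by omega) hle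
        obtain ⟨hmem', _, hdist'⟩ := hxs m hm (by omega)
        have hih := ih hm (by omega)
        have h1 := isMinOn_iff.mp hminon (xs m) hmem'
        simp only [Nat.add_sub_cancel] at h1
        have hrev : ‖xs m - x m‖ = ‖x m - xs m‖ := norm_sub_rev _ _
        have hdd : ‖xs m - x m‖ ≤ Δ * 4 ^ m / (lam * 32 ^ m) := by rw [hrev]; exact hdist'
        have hE : lam * 32 ^ (m+1) / 2 * (Δ * 4 ^ m / (lam * 32 ^ m)) ^ 2
            = 16 * Δ ^ 2 / lam * (1/2) ^ m := by
          have h16 : ((4:ℝ) ^ m) ^ 2 = 16 ^ m := by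
            rw [← pow_mul, mul_comm, pow_mul]; norm_num
          have h2 : ((1:ℝ)/2) ^ m = 16 ^ m / 32 ^ m := by
            rw [show (1:ℝ)/2 = 16/32 by norm_num, div_pow]
          have h32 : (32:ℝ) ^ m ≠ 0 := by positivity
          rw [h2, pow_succ]
          field_simp
          ring_nf
          rw [← h16]
          ring
        have hstep : F (xs (m+1)) ≤ F (xs m) + 16 * Δ ^ 2 / lam * (1/2) ^ m := by
          have hnn : (0:ℝ) ≤ lam * 32 ^ (m+1) / 2 := by positivity
          have hsq : ‖xs m - x m‖ ^ 2 ≤ (Δ * 4 ^ m / (lam * 32 ^ m)) ^ 2 := by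
            apply pow_le_pow_left₀ (norm_nonneg _) hdd
          have hn1 : (0:ℝ) ≤ ‖xs (m+1) - x m‖ ^ 2 := by positivity
          nlinarith [h1]
        have hhalf : (16 * Δ ^ 2 / lam) * ((1 - 2 * (1/2) ^ m) + (1/2) ^ m)
            = 16 * Δ ^ 2 / lam * (1 - 2 * (1/2) ^ (m+1)) := by ring
        calc F (xs (m+1)) ≤ F (xs m) + 16 * Δ ^ 2 / lam * (1/2) ^ m := hstep
          _ ≤ F xmin + 16 * lam * D ^ 2 + 16 * Δ ^ 2 / lam * (1 - 2 * (1/2) ^ m)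
              + 16 * Δ ^ 2 / lam * (1/2) ^ m := by linarith
          _ = F xmin + 16 * lam * D ^ 2 + 16 * Δ ^ 2 / lam * (1 - 2 * (1/2) ^ (m+1)) := by ring
  -- last step : Lipschitz
  obtain ⟨hmemI, _, hdistI⟩ := hxs I hI le_rfl
  have hlipI := hlip (x I) (hx I hI le_rfl) (xs I) hmemI
  have hlast : F (x I) - F (xs I) ≤ G₁ * (Δ * 4 ^ I / (lam * 32 ^ I)) :=
    le_trans (le_trans (le_abs_self _) hlipI)
      (mul_le_mul_of_nonneg_left hdistI hG₁)
  have hpow8 : G₁ * (Δ * 4 ^ I / (lam * 32 ^ I)) = G₁ * Δ / 8 ^ I / lam := by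
    have h32 : (32:ℝ) ^ I = 4 ^ I * 8 ^ I := by rw [← mul_pow]; norm_num
    have h4 : (4:ℝ) ^ I ≠ 0 := by positivity
    have h8 : (8:ℝ) ^ I ≠ 0 := by positivity
    rw [h32]; field_simp
  have hkeyI := key I hI le_rfl
  have hhalfpos : (0:ℝ) < (1/2:ℝ) ^ I := by positivity
  have hbound : F (x I) - F xmin ≤ G₁ * Δ / 8 ^ I / lam + 16 * lam * D ^ 2 + 16 * Δ ^ 2 / lam := by
    have h1 : 16 * Δ ^ 2 / lam * (1 - 2 * (1/2) ^ I) ≤ 16 * Δ ^ 2 / lam := by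
      have : (0:ℝ) ≤ 16 * Δ ^ 2 / lam := by positivity
      nlinarith
    rw [← hpow8]
    linarith
  -- algebra with sqrt
  set S := 16 * Δ ^ 2 + G₁ * Δ / 8 ^ I with hSdef
  have hs : Real.sqrt S > 0 := Real.sqrt_pos.mpr hS
  have hs2 : Real.sqrt S ^ 2 = S := Real.sq_sqrt hS.le
  have hlamS : lam = Real.sqrt S / (4 * D) := hlam
  have hsum : G₁ * Δ / 8 ^ I / lam + 16 * lam * D ^ 2 + 16 * Δ ^ 2 / lam
      = S / lam + 16 * lam * D ^ 2 := by rw [hSdef]; ring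
  have hSlam : S / lam = 4 * D * Real.sqrt S := by
    rw [hlamS, div_div_eq_mul_div, mul_comm, mul_div_assoc, Real.div_sqrt]
  have hlamD : 16 * lam * D ^ 2 = 4 * D * Real.sqrt S := by
    rw [hlamS]; field_simp; ring
  have hRHS : G₁ * Δ / 8 ^ I / lam + 16 * lam * D ^ 2 + 16 * Δ ^ 2 / lam
      = 8 * D * Real.sqrt S := by rw [hsum, hSlam, hlamD]; ring
  have hsplit : Real.sqrt S ≤ 4 * Δ + Real.sqrt (G₁ * Δ / 8 ^ I) := by
    rw [Real.sqrt_le_iff]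
    have h2 : Real.sqrt (G₁ * Δ / 8 ^ I) ^ 2 = G₁ * Δ / 8 ^ I :=
      Real.sq_sqrt (by positivity)
    constructor
    · positivity
    · nlinarith [Real.sqrt_nonneg (G₁ * Δ / 8 ^ I)]
  have := hbound
  rw [hRHS] at this
  have hmul : 8 * D * Real.sqrt S ≤ 8 * D * (4 * Δ + Real.sqrt (G₁ * Δ / 8 ^ I)) :=
    mul_le_mul_of_nonneg_left hsplit (by positivity)
  linarith
end

section
/- (Drift of coupled operation sequences.) Let 𝒳 ⊆ ℝ^d, x₀ ∈ 𝒳, T ≥ 1 an integer, and let ψ₁,…,ψ_T and φ₁,…,φ_T be maps 𝒳 → 𝒳. Let C, ζ > 0 and c ∈ ℕ with c·ζ ≤ C. Suppose {1,…,T} is partitioned into three (disjoint) sets S₁, S₂, S₃ such that: (i) for every j ∈ S₁ and all x, y ∈ 𝒳, ‖ψⱼ(x) − φⱼ(y)‖ ≤ ‖x − y‖ (contractive pairs); (ii) |S₂| ≤ 1 and for j ∈ S₂ and all x, y ∈ 𝒳, ‖ψⱼ(x) − φⱼ(y)‖ ≤ ‖x − y‖ + C ((∞,C)-contractive pair); (iii)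 |S₃| ≤ c and for every j ∈ S₃ and all x, y ∈ 𝒳 with ‖x − y‖ ≤ 2C, ‖ψⱼ(x) − φⱼ(y)‖ ≤ ‖x − y‖ + ζ ((2C,ζ)-contractive pairs). Then for every j ∈ {1,…,T}, ‖(ψⱼ∘ψ_{j−1}∘⋯∘ψ₁)(x₀) − (φⱼ∘φ_{j−1}∘⋯∘φ₁)(x₀)‖ ≤ 2C. -/
/-- The composed iterate `(ψⱼ ∘ ψ_{j−1} ∘ ⋯ ∘ ψ₁)(x₀)`, where `ψ` is indexed from 1. -/
def iterSeq {E : Type*} (ψ : ℕ → E → E) (x₀ : E) : ℕ → E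
  | 0 => x₀
  | j + 1 => ψ (j + 1) (iterSeq ψ x₀ j)

/-- Drift of coupled operation sequences: if the operation pairs
`(ψⱼ, φⱼ)`, `j = 1, …, T`, partition into contractive pairs, at most one
`(∞,C)`-contractive pair, and at most `c` pairs that are `(2C,ζ)`-contractive, with
`c·ζ ≤ C`, then every pair of coupled iterates started at a common `x₀` stays within
distance `2C`. -/
theorem coupled_drift_bound
    {d : ℕ} (X : Set (EuclideanSpace ℝ (Fin d)))
    (x₀ : EuclideanSpace ℝ (Fin d)) (hx₀ : x₀ ∈ X)
    (T : ℕ) (hT : 1 ≤ T)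
    (ψ φ : ℕ → EuclideanSpace ℝ (Fin d) → EuclideanSpace ℝ (Fin d))
    (hψ : ∀ j ∈ Finset.Icc 1 T, Set.MapsTo (ψ j) X X)
    (hφ : ∀ j ∈ Finset.Icc 1 T, Set.MapsTo (φ j) X X)
    (C ζ : ℝ) (hC : 0 < C) (hζ : 0 < ζ)
    (c : ℕ) (hcζ : (c : ℝ) * ζ ≤ C)
    (S₁ S₂ S₃ : Finset ℕ)
    (hpart : S₁ ∪ S₂ ∪ S₃ = Finset.Icc 1 T)
    (h12 : Disjoint S₁ S₂) (h13 : Disjoint S₁ S₃) (h23 : Disjoint S₂ S₃)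
    (hS1 : ∀ j ∈ S₁, ∀ x ∈ X, ∀ y ∈ X, ‖ψ j x - φ j y‖ ≤ ‖x - y‖)
    (hS2card : S₂.card ≤ 1)
    (hS2 : ∀ j ∈ S₂, ∀ x ∈ X, ∀ y ∈ X, ‖ψ j x - φ j y‖ ≤ ‖x - y‖ + C)
    (hS3card : S₃.card ≤ c)
    (hS3 : ∀ j ∈ S₃, ∀ x ∈ X, ∀ y ∈ X, ‖x - y‖ ≤ 2 * C → ‖ψ j x - φ j y‖ ≤ ‖x - y‖ + ζ) :
    ∀ j ∈ Finset.Icc 1 T, ‖iterSeq ψ x₀ j - iterSeq φ x₀ j‖ ≤ 2 * C := by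
  have key : ∀ k, k ≤ T → iterSeq ψ x₀ k ∈ X ∧ iterSeq φ x₀ k ∈ X ∧
      ‖iterSeq ψ x₀ k - iterSeq φ x₀ k‖ ≤
        ((S₂ ∩ Finset.Icc 1 k).card : ℝ) * C + ((S₃ ∩ Finset.Icc 1 k).card : ℝ) * ζ := by
    intro k
    induction k with
    | zero =>
      intro _
      refine ⟨hx₀, hx₀, ?_⟩
      simp [iterSeq]
    | succ n ih =>
      intro hk
      obtain ⟨hxn, hyn, hbn⟩ := ih (by omega)
      have hmem : n + 1 ∈ Finset.Icc 1 T := by simp; omega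
      have hx' : iterSeq ψ x₀ (n + 1) ∈ X := hψ _ hmem hxn
      have hy' : iterSeq φ x₀ (n + 1) ∈ X := hφ _ hmem hyn
      refine ⟨hx', hy', ?_⟩
      have h2c : ((S₂ ∩ Finset.Icc 1 n).card : ℝ) ≤ 1 := by
        exact_mod_cast le_trans (Finset.card_le_card Finset.inter_subset_left) hS2card
      have h3c : ((S₃ ∩ Finset.Icc 1 n).card : ℝ) ≤ (c : ℝ) := by
        exact_mod_cast le_trans (Finset.card_le_card Finset.inter_subset_left) hS3card
      have hbound2C : ‖iterSeq ψ x₀ n - iterSeq φ x₀ n‖ ≤ 2 * C := by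
        calc ‖iterSeq ψ x₀ n - iterSeq φ x₀ n‖
            ≤ ((S₂ ∩ Finset.Icc 1 n).card : ℝ) * C + ((S₃ ∩ Finset.Icc 1 n).card : ℝ) * ζ := hbn
          _ ≤ 1 * C + (c : ℝ) * ζ := by
              gcongr
          _ ≤ 2 * C := by linarith
      have hsub : Finset.Icc 1 n ⊆ Finset.Icc 1 (n + 1) :=
        Finset.Icc_subset_Icc_right (by omega)
      have hni : n + 1 ∉ Finset.Icc 1 n := by simp
      have hm2 : ((S₂ ∩ Finset.Icc 1 n).card : ℝ) ≤ ((S₂ ∩ Finset.Icc 1 (n + 1)).card : ℝ) := by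
        exact_mod_cast Finset.card_le_card (Finset.inter_subset_inter le_rfl hsub)
      have hm3 : ((S₃ ∩ Finset.Icc 1 n).card : ℝ) ≤ ((S₃ ∩ Finset.Icc 1 (n + 1)).card : ℝ) := by
        exact_mod_cast Finset.card_le_card (Finset.inter_subset_inter le_rfl hsub)
      have hstep : ∀ S : Finset ℕ, n + 1 ∈ S →
          ((S ∩ Finset.Icc 1 n).card : ℝ) + 1 ≤ ((S ∩ Finset.Icc 1 (n + 1)).card : ℝ) := by
        intro S hS
        have hins : insert (n + 1) (S ∩ Finset.Icc 1 n) ⊆ S ∩ Finset.Icc 1 (n + 1) := by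
          refine Finset.insert_subset ?_ (Finset.inter_subset_inter le_rfl hsub)
          simp [hS]
        have hni' : n + 1 ∉ S ∩ Finset.Icc 1 n := by
          simp [Finset.mem_inter]
        have := Finset.card_le_card hins
        rw [Finset.card_insert_of_notMem hni'] at this
        exact_mod_cast this
      have hΔ : iterSeq ψ x₀ (n + 1) = ψ (n + 1) (iterSeq ψ x₀ n) := rfl
      have hΔ' : iterSeq φ x₀ (n + 1) = φ (n + 1) (iterSeq φ x₀ n) := rfl
      have hcase : n + 1 ∈ S₁ ∪ S₂ ∪ S₃ := hpart ▸ hmem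
      simp only [Finset.mem_union] at hcase
      rcases hcase with (h1 | h2) | h3
      · calc ‖iterSeq ψ x₀ (n + 1) - iterSeq φ x₀ (n + 1)‖
            ≤ ‖iterSeq ψ x₀ n - iterSeq φ x₀ n‖ := by
              rw [hΔ, hΔ']; exact hS1 _ h1 _ hxn _ hyn
          _ ≤ ((S₂ ∩ Finset.Icc 1 n).card : ℝ) * C + ((S₃ ∩ Finset.Icc 1 n).card : ℝ) * ζ := hbn
          _ ≤ _ := by gcongr
      · have h2' := hstep S₂ h2
        calc ‖iterSeq ψ x₀ (n + 1) - iterSeq φ x₀ (n + 1)‖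
            ≤ ‖iterSeq ψ x₀ n - iterSeq φ x₀ n‖ + C := by
              rw [hΔ, hΔ']; exact hS2 _ h2 _ hxn _ hyn
          _ ≤ (((S₂ ∩ Finset.Icc 1 n).card : ℝ) + 1) * C
              + ((S₃ ∩ Finset.Icc 1 n).card : ℝ) * ζ := by linarith
          _ ≤ _ := by gcongr
      · have h3' := hstep S₃ h3
        calc ‖iterSeq ψ x₀ (n + 1) - iterSeq φ x₀ (n + 1)‖
            ≤ ‖iterSeq ψ x₀ n - iterSeq φ x₀ n‖ + ζ := by
              rw [hΔ, hΔ']; exact hS3 _ h3 _ hxn _ hyn hbound2C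
          _ ≤ ((S₂ ∩ Finset.Icc 1 n).card : ℝ) * C
              + (((S₃ ∩ Finset.Icc 1 n).card : ℝ) + 1) * ζ := by linarith
          _ ≤ _ := by gcongr
  intro j hj
  rw [Finset.mem_Icc] at hj
  obtain ⟨_, _, hb⟩ := key j hj.2
  have h2c : ((S₂ ∩ Finset.Icc 1 j).card : ℝ) ≤ 1 := by
    exact_mod_cast le_trans (Finset.card_le_card Finset.inter_subset_left) hS2card
  have h3c : ((S₃ ∩ Finset.Icc 1 j).card : ℝ) ≤ (c : ℝ) := by
    exact_mod_cast le_trans (Finset.card_le_card Finset.inter_subset_left) hS3card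
  calc ‖iterSeq ψ x₀ j - iterSeq φ x₀ j‖
      ≤ ((S₂ ∩ Finset.Icc 1 j).card : ℝ) * C + ((S₃ ∩ Finset.Icc 1 j).card : ℝ) * ζ := hb
    _ ≤ 1 * C + (c : ℝ) * ζ := by gcongr
    _ ≤ 2 * C := by linarith
end

section
/- Let s, s' ∈ ℝ and x, x', g ∈ ℝ^d, and suppose ‖(x − s·g) − (x' − s'·g)‖ ≤ ‖x − x'‖. Then for any C ≥ 0, setting t := sign(s)·min(|s|, C) and t' := sign(s')·min(|s'|, C), it holds that ‖(x − t·g) − (x' − t'·g)‖ ≤ ‖x − x'‖. -/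
/-- The sign of a real number, with the convention `sgn 0 = 1`. -/
noncomputable def sgn (x : ℝ) : ℝ := if x < 0 then -1 else 1

lemma clip_eq (C s : ℝ) (hC : 0 ≤ C) : sgn s * min |s| C = max (-C) (min s C) := by
  unfold sgn
  rcases lt_or_ge s 0 with h | h
  · rw [if_pos h, abs_of_neg h]
    simp only [min_def, max_def]
    split_ifs <;> linarith
  · rw [if_neg (not_lt.mpr h), abs_of_nonneg h]
    simp only [min_def, max_def]
    split_ifs <;> linarith

lemma clip_fact (C s s' : ℝ) :
    0 ≤ (max (-C) (min s C) - max (-C) (min s' C)) * (s - s') ∧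
    |max (-C) (min s C) - max (-C) (min s' C)| ≤ |s - s'| := by
  simp only [min_def, max_def]
  constructor
  · split_ifs <;> nlinarith
  · rw [abs_le]
    constructor <;>
    · split_ifs <;> cases abs_cases (s - s') <;> linarith [abs_nonneg (s - s')]

/-- If the coupled gradient step along a common direction `g` with step
scalars `s, s'` is contractive, then it remains contractive after clipping the scalars
to `[-C, C]` (i.e., replacing `s` by `sign(s)·min(|s|, C)` and likewise for `s'`). -/
theorem scalar_clipping_preserves_contraction
    {d : ℕ} (s s' : ℝ) (C : ℝ) (hC : 0 ≤ C)
    (x x' g : EuclideanSpace ℝ (Fin d))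
    (h : ‖(x - s • g) - (x' - s' • g)‖ ≤ ‖x - x'‖) :
    ‖(x - (sgn s * min |s| C) • g) - (x' - (sgn s' * min |s'| C) • g)‖ ≤ ‖x - x'‖ := by
  rw [clip_eq C s hC, clip_eq C s' hC]
  set v := x - x' with hv
  have hrw : ∀ c c' : ℝ, x - c • g - (x' - c' • g) = v - (c - c') • g := by
    intro c c'; rw [hv, sub_smul]; abel
  rw [hrw] at h ⊢
  set a := s - s' with ha
  set b := max (-C) (min s C) - max (-C) (min s' C) with hb
  obtain ⟨hsign, hlip⟩ := clip_fact C s s'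
  rw [← ha, ← hb] at hsign hlip
  obtain ⟨θ, hθ0, hθ1, hθ⟩ : ∃ θ : ℝ, 0 ≤ θ ∧ θ ≤ 1 ∧ b = θ * a := by
    rcases eq_or_ne a 0 with h0 | h0
    · refine ⟨0, le_refl _, zero_le_one, ?_⟩
      have h1 : |b| ≤ 0 := by rw [h0, abs_zero] at hlip; exact hlip
      have hb0 : b = 0 := abs_eq_zero.mp (le_antisymm h1 (abs_nonneg b))
      simp [hb0]
    · refine ⟨b / a, ?_, ?_, by field_simp⟩
      · have heq : b / a = b * a / a ^ 2 := by field_simp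
        rw [heq]; positivity
      · have habs : |b / a| ≤ 1 := by
          rw [abs_div]
          exact div_le_one_of_le₀ hlip (abs_nonneg a)
        exact le_trans (le_abs_self _) habs
  rw [hθ]
  have key : v - (θ * a) • g = (1 - θ) • v + θ • (v - a • g) := by
    module
  rw [key]
  calc ‖(1 - θ) • v + θ • (v - a • g)‖ ≤ ‖(1 - θ) • v‖ + ‖θ • (v - a • g)‖ := norm_add_le _ _
    _ = (1 - θ) * ‖v‖ + θ * ‖v - a • g‖ := by
        rw [norm_smul, norm_smul, Real.norm_eq_abs, Real.norm_eq_abs,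
          abs_of_nonneg (by linarith), abs_of_nonneg hθ0]
    _ ≤ (1 - θ) * ‖v‖ + θ * ‖v‖ := by nlinarith
    _ = ‖v‖ := by ring
end

section
/- For every C > 0 there exist vectors v, g, h ∈ ℝ² such that ‖v‖ ≤ C and ‖v − (g − h)‖ ≤ ‖v‖, yet ‖v − (Π₁(g) − Π₁(h))‖ > C, where Π₁(u) := u·min(1/‖u‖, 1) denotes Euclidean clipping to the unit ball (with Π₁(0) = 0). In particular, truncating the gradients of a contractive coupled step (with post-truncation difference bound C, allowing gradient norms up to 1 after clipping) can destroy contractivity. -/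
/-!
Clipping leaves a `g` with `‖g‖ ≤ 1` unchanged and replaces an `h` with `‖h‖ > 1` by `h / ‖h‖`,
so the residual `w = v - (g - h)` becomes `w - (1 - ‖h‖⁻¹) • h`. When `w` makes an obtuse angle
with `h` this is strictly longer than `w`. The witness takes a unit vector `g`, `v = -C • g` and `h`
such that `w` has length `C` and is orthogonal to `h`; this forces `‖h‖ = √(2C + 1) > 1`.
-/

/-- Euclidean clipping to the unit ball: `Π₁(u) = u·min(1/‖u‖, 1)`,
with `Π₁(0) = 0` (division by zero yields `0` in Lean). -/
noncomputable def unitClip (u : EuclideanSpace ℝ (Fin 2)) : EuclideanSpace ℝ (Fin 2) :=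
  (min (1 / ‖u‖) 1) • u

open RealInnerProductSpace

theorem norm_lt_norm_sub_smul_of_inner_nonpos {F : Type*} [NormedAddCommGroup F]
    [InnerProductSpace ℝ F] {w h : F} {t : ℝ} (hwh : ⟪w, h⟫ ≤ 0) (h0 : h ≠ 0) (ht : 0 < t) :
    ‖w‖ < ‖w - t • h‖ := by
  refine lt_of_pow_lt_pow_left₀ 2 (norm_nonneg _) ?_
  have hh : 0 < ‖h‖ := norm_pos_iff.mpr h0
  rw [norm_sub_sq_real, real_inner_smul_right, norm_smul, Real.norm_of_nonneg ht.le]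
  nlinarith [mul_pos ht hh]

theorem unitClip_of_norm_le_one {u : EuclideanSpace ℝ (Fin 2)} (hu : ‖u‖ ≤ 1) :
    unitClip u = u := by
  rcases eq_or_ne u 0 with rfl | hu0
  · simp [unitClip]
  · rw [unitClip, min_eq_right (one_le_one_div (norm_pos_iff.mpr hu0) hu), one_smul]

theorem unitClip_of_one_le_norm {u : EuclideanSpace ℝ (Fin 2)} (hu : 1 ≤ ‖u‖) :
    unitClip u = ‖u‖⁻¹ • u := by
  rw [unitClip, min_eq_left ((div_le_one (by linarith)).mpr hu), one_div]

theorem norm_sub_lt_norm_sub_unitClip {v g h : EuclideanSpace ℝ (Fin 2)} (hg : ‖g‖ ≤ 1)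
    (hh : 1 < ‖h‖) (hwh : ⟪v - (g - h), h⟫ ≤ 0) :
    ‖v - (g - h)‖ < ‖v - (unitClip g - unitClip h)‖ := by
  have hclip : v - (unitClip g - unitClip h) = v - (g - h) - (1 - ‖h‖⁻¹) • h := by
    rw [unitClip_of_norm_le_one hg, unitClip_of_one_le_norm hh.le, sub_smul, one_smul]
    abel
  rw [hclip]
  exact norm_lt_norm_sub_smul_of_inner_nonpos hwh (norm_pos_iff.mp (by linarith))
    (sub_pos.mpr (inv_lt_one_of_one_lt₀ hh))

theorem norm_vec2 (a b : ℝ) : ‖!₂[a, b]‖ = √(a ^ 2 + b ^ 2) := by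
  simp [EuclideanSpace.norm_eq, Fin.sum_univ_two]

/-- For every `C > 0` there are vectors `v, g, h ∈ ℝ²` with `‖v‖ ≤ C` and
`‖v − (g − h)‖ ≤ ‖v‖`, yet `‖v − (Π₁(g) − Π₁(h))‖ > C`: clipping the gradients of a
contractive coupled step can destroy contractivity. -/
theorem clipping_destroys_contraction :
    ∀ C : ℝ, 0 < C →
      ∃ v g h : EuclideanSpace ℝ (Fin 2),
        ‖v‖ ≤ C ∧ ‖v - (g - h)‖ ≤ ‖v‖ ∧ C < ‖v - (unitClip g - unitClip h)‖ := by
  intro C hC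
  set s := √(2 * C + 1)
  have hs : s ^ 2 = 2 * C + 1 := Real.sq_sqrt (by linarith)
  have hs1 : 1 < s := Real.lt_sqrt zero_le_one |>.mpr (by linarith)
  set g : EuclideanSpace ℝ (Fin 2) := (C + 1)⁻¹ • !₂[s, -C]
  have hg : ‖g‖ = 1 := by
    rw [norm_smul, norm_vec2, show s ^ 2 + (-C) ^ 2 = (C + 1) ^ 2 by rw [hs]; ring,
      Real.sqrt_sq (by linarith), Real.norm_of_nonneg (by positivity),
      inv_mul_cancel₀ (by positivity)]
  have hv : ‖-C • g‖ = C := by rw [norm_smul, hg, norm_neg, Real.norm_of_nonneg hC.le, mul_one]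
  have hres : -C • g - (g - !₂[s, 0]) = !₂[0, C] := by
    rw [show -C • g - (g - !₂[s, 0]) = !₂[s, 0] - (C + 1) • g by module,
      smul_inv_smul₀ (by positivity)]
    ext i; fin_cases i <;> simp
  have hw : ‖!₂[0, C]‖ = C := by simp [norm_vec2, Real.sqrt_sq hC.le]
  have hh : ‖!₂[s, 0]‖ = s := by simp [norm_vec2, Real.sqrt_sq (by linarith : 0 ≤ s)]
  have hperp : ⟪!₂[0, C], !₂[s, 0]⟫ = 0 := by simp [PiLp.inner_apply, Fin.sum_univ_two]
  refine ⟨-C • g, g, !₂[s, 0], hv.le, by rw [hres, hw, hv], ?_⟩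
  calc C = ‖-C • g - (g - !₂[s, 0])‖ := by rw [hres, hw]
    _ < _ := norm_sub_lt_norm_sub_unitClip hg.le (hh.symm ▸ hs1) (by rw [hres, hperp])
end

section
/- Let 𝒢 be the family of all functions g: [0,1] → ℝ taking values in [0,1] whose support {t ∈ [0,1] : g(t) ≠ 0} is finite. Then: (i) every g ∈ 𝒢 satisfies ∫₀¹ g(t) dt = 0 (Lebesgue integral) and |g(t)| ≤ 1 for all t ∈ [0,1]; and (ii) for every integer n ≥ 1 and every choice of points s₁, …, sₙ ∈ [0,1], there exists g ∈ 𝒢 with (1/n)·Σ_{i=1}^n g(sᵢ) = 1. Consequently, sup_{g∈𝒢} ((1/n)·Σ_{i=1}^n g(sᵢ))² = 1 for every finite sample, so the supremum of the squared empirical mean over this family of mean-zero, uniformly bounded functions does not decay as O(1/n). -/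
open MeasureTheory

/-- The family 𝒢 of all functions on `[0,1]` taking values in `[0,1]` whose support
within `[0,1]` is finite (extended to all of `ℝ` for convenience). -/
def Gfam : Set (ℝ → ℝ) :=
  {g | (∀ t ∈ Set.Icc (0 : ℝ) 1, g t ∈ Set.Icc (0 : ℝ) 1) ∧
    {t ∈ Set.Icc (0 : ℝ) 1 | g t ≠ 0}.Finite}

lemma Gfam_mean_sq_le {n : ℕ} (hn : 1 ≤ n) (s : Fin n → ℝ)
    (hs : ∀ i, s i ∈ Set.Icc (0 : ℝ) 1) (g : ℝ → ℝ) (hg : g ∈ Gfam) :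
    ((n : ℝ)⁻¹ * ∑ i, g (s i)) ^ 2 ≤ 1 := by
  have hnpos : (0 : ℝ) < n := by exact_mod_cast hn
  have hle : ∑ i, g (s i) ≤ ∑ i : Fin n, (1 : ℝ) :=
    Finset.sum_le_sum fun i _ => ((hg.1 _ (hs i)).2)
  have hge : (0 : ℝ) ≤ ∑ i, g (s i) :=
    Finset.sum_nonneg fun i _ => ((hg.1 _ (hs i)).1)
  have h1 : ((n : ℝ)⁻¹ * ∑ i, g (s i)) ≤ 1 := by
    rw [Finset.sum_const, Finset.card_univ, Fintype.card_fin, nsmul_eq_mul, mul_one] at hle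
    rw [inv_mul_le_iff₀ hnpos]; linarith
  have h0 : (0 : ℝ) ≤ (n : ℝ)⁻¹ * ∑ i, g (s i) := by positivity
  calc ((n : ℝ)⁻¹ * ∑ i, g (s i)) ^ 2 ≤ 1 ^ 2 := by
        apply pow_le_pow_left₀ h0 h1
    _ = 1 := one_pow 2

/-- (i) every `g ∈ 𝒢` has Lebesgue integral `0` over `[0,1]` and is
bounded by `1` there; (ii) for every `n ≥ 1` and sample `s₁, …, sₙ ∈ [0,1]` there is
`g ∈ 𝒢` with empirical mean `1`; consequently
`sup_{g ∈ 𝒢} ((1/n)∑ᵢ g(sᵢ))² = 1`, so the supremum of the squared empirical mean over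
this family of mean-zero uniformly bounded functions does not decay with `n`. -/
theorem empirical_squared_bias_non_decay :
    (∀ g ∈ Gfam,
        (∫ t in Set.Icc (0 : ℝ) 1, g t) = 0 ∧ ∀ t ∈ Set.Icc (0 : ℝ) 1, |g t| ≤ 1) ∧
    (∀ n : ℕ, 1 ≤ n → ∀ s : Fin n → ℝ, (∀ i, s i ∈ Set.Icc (0 : ℝ) 1) →
        (∃ g ∈ Gfam, (n : ℝ)⁻¹ * ∑ i, g (s i) = 1) ∧
        (⨆ g : Gfam, ((n : ℝ)⁻¹ * ∑ i, (g : ℝ → ℝ) (s i)) ^ 2) = 1) := by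
  constructor
  · intro g hg
    constructor
    · apply integral_eq_zero_of_ae
      rw [Filter.EventuallyEq, ae_iff, Measure.restrict_apply' measurableSet_Icc]
      refine measure_mono_null (fun t ht => ?_) (hg.2.measure_zero _)
      exact ⟨ht.2, ht.1⟩
    · intro t ht
      have := hg.1 t ht
      rw [abs_le]; exact ⟨by linarith [this.1], this.2⟩
  · intro n hn s hs
    set g0 : ℝ → ℝ := (Set.range s).indicator 1 with hg0def
    have hg0mem : g0 ∈ Gfam := by
      constructor
      · intro t ht
        by_cases h : t ∈ Set.range s
        · simp [hg0def, Set.indicator_of_mem h]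
        · simp [hg0def, Set.indicator_of_notMem h]
      · refine Set.Finite.subset (Set.finite_range s) (fun t ht => ?_)
        by_contra h
        exact ht.2 (Set.indicator_of_notMem h _)
    have hnpos : (0 : ℝ) < n := by exact_mod_cast hn
    have hmean : (n : ℝ)⁻¹ * ∑ i, g0 (s i) = 1 := by
      have : ∀ i : Fin n, g0 (s i) = 1 := fun i =>
        Set.indicator_of_mem (Set.mem_range_self i) _
      simp [this, Finset.sum_const, Finset.card_univ]
      field_simp
    refine ⟨⟨g0, hg0mem, hmean⟩, ?_⟩
    apply le_antisymm
    · haveI : Nonempty Gfam := ⟨⟨g0, hg0mem⟩⟩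
      exact ciSup_le fun ⟨g, hg⟩ => Gfam_mean_sq_le hn s hs g hg
    · have := le_ciSup (f := fun g : Gfam => ((n : ℝ)⁻¹ * ∑ i, (g : ℝ → ℝ) (s i)) ^ 2)
        (c := ⟨g0, hg0mem⟩) ⟨1, fun y hy => by
          obtain ⟨⟨g, hg⟩, rfl⟩ := hy
          exact Gfam_mean_sq_le hn s hs g hg⟩
      simpa [hmean] using this
end
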